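/- Let X be a mixture set, n ≥ 2 a finite integer, and ≽ a binary relation on X^n satisfying axioms F1, F2′, F3, F4, F5 and F7 (stationarity). Then every period t ∈ {1,…,n} is essential: there exist a, b ∈ X and x ∈ X^n such that the stream obtained from x by replacing coordinate t with a is strictly preferred to the stream obtained from x by replacing coordinate t with b. -/
import Mathlib


/-- A mixture set: a set `X` with an operation `mix x l y` (written `xλy` in the paper),
satisfying the Herstein–Milnor axioms for `l, m ∈ [0,1]`. -/
structure MixtureSpace (X : Type*) where
  mix : X → ℝ → X → X
  mix_one : ∀ x y : X, mix x 1 y = x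
  mix_comm : ∀ (x y : X), ∀ l ∈ Set.Icc (0:ℝ) 1, mix x l y = mix y (1 - l) x
  mix_assoc : ∀ (x y : X), ∀ l ∈ Set.Icc (0:ℝ) 1, ∀ m ∈ Set.Icc (0:ℝ) 1,
    mix (mix x m y) l y = mix x (l * m) y

/-- `u : X → ℝ` is mixture linear. -/
def MixtureSpace.linear {X : Type*} (M : MixtureSpace X) (u : X → ℝ) : Prop :=
  ∀ (x y : X), ∀ l ∈ Set.Icc (0:ℝ) 1, u (M.mix x l y) = l * u x + (1 - l) * u y

/-- Strict (asymmetric) part of a relation. -/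
def strictP {α : Type*} (R : α → α → Prop) (x y : α) : Prop := R x y ∧ ¬ R y x

/-- Componentwise mixture of finite streams. -/
def mixStream {X : Type*} (M : MixtureSpace X) {n : ℕ} (x : Fin n → X) (l : ℝ)
    (y : Fin n → X) : Fin n → X := fun t => M.mix (x t) l (y t)

/-- Componentwise mixture of infinite streams. -/
def mixSeq {X : Type*} (M : MixtureSpace X) (x : ℕ → X) (l : ℝ) (y : ℕ → X) :
    ℕ → X := fun t => M.mix (x t) l (y t)

/-! ### Finite-horizon axioms -/

/-- F1: weak order (complete and transitive). -/
def AxF1 {X : Type*} {n : ℕ} (R : (Fin n → X) → (Fin n → X) → Prop) : Prop :=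
  (∀ x y, R x y ∨ R y x) ∧ Transitive R

/-- F2: non-triviality (a ≻ b for some a, b in the induced relation). -/
def AxF2 {X : Type*} {n : ℕ} (R : (Fin n → X) → (Fin n → X) → Prop) : Prop :=
  ∃ a b : X, strictP R (fun _ => a) (fun _ => b)

/-- F3: mixture independence. -/
def AxF3 {X : Type*} (M : MixtureSpace X) {n : ℕ}
    (R : (Fin n → X) → (Fin n → X) → Prop) : Prop :=
  ∀ x y z : Fin n → X, ∀ l ∈ Set.Ioo (0:ℝ) 1,
    (R x y ↔ R (mixStream M x l z) (mixStream M y l z))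

/-- F4: mixture continuity. -/
def AxF4 {X : Type*} (M : MixtureSpace X) {n : ℕ}
    (R : (Fin n → X) → (Fin n → X) → Prop) : Prop :=
  ∀ x y z : Fin n → X,
    IsClosed {l : ℝ | l ∈ Set.Icc (0:ℝ) 1 ∧ R (mixStream M x l z) y} ∧
    IsClosed {l : ℝ | l ∈ Set.Icc (0:ℝ) 1 ∧ R y (mixStream M x l z)}

/-- F5: monotonicity. -/
def AxF5 {X : Type*} {n : ℕ} (R : (Fin n → X) → (Fin n → X) → Prop) : Prop :=
  ∀ x y : Fin n → X, (∀ t, R (fun _ => x t) (fun _ => y t)) → R x y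

/-- `(u, w)` provides an AA representation for `R` on `X^n`. -/
def AARep {X : Type*} (M : MixtureSpace X) {n : ℕ}
    (R : (Fin n → X) → (Fin n → X) → Prop) (u : X → ℝ) (w : Fin n → ℝ) : Prop :=
  M.linear u ∧ (∃ a b : X, u a ≠ u b) ∧ (∀ t, 0 ≤ w t) ∧ (∃ t, 0 < w t) ∧
  ∀ x y : Fin n → X, (R x y ↔ (∑ t, w t * u (x t)) ≥ ∑ t, w t * u (y t))

/-! ### Infinite-horizon notions -/

/-- Ultimately constant stream (equals `x0` from some period on). -/
def UltConst {X : Type*} (x0 : X) (x : ℕ → X) : Prop := ∃ T, ∀ t, T ≤ t → x t = x0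

/-- Member of `X**`: ultimately constant or constant. -/
def InXSS {X : Type*} (x0 : X) (x : ℕ → X) : Prop :=
  UltConst x0 x ∨ ∃ a, ∀ t, x t = a

/-- `[a]_k`: the stream with `a` in period `k` and `x0` elsewhere. -/
def bracket {X : Type*} (x0 : X) (a : X) (k : ℕ) : ℕ → X :=
  fun t => if t = k then a else x0

/-- `(x₁, …, x_{k−1}, a, x_{k+1}, …, x_T, x0, x0, …)`. -/
def truncMod {X : Type*} (x0 : X) (x : ℕ → X) (k : ℕ) (a : X) (T : ℕ) : ℕ → X :=
  fun t => if t = k then a else if t ≤ T then x t else x0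

/-- I1: weak order. -/
def AxI1 {X : Type*} (R : (ℕ → X) → (ℕ → X) → Prop) : Prop :=
  (∀ x y, R x y ∨ R y x) ∧ Transitive R

/-- I2: non-triviality `a ≻ x0 ≻ b` in the induced relation. -/
def AxI2 {X : Type*} (x0 : X) (R : (ℕ → X) → (ℕ → X) → Prop) : Prop :=
  ∃ a b : X, strictP R (fun _ => a) (fun _ => x0) ∧ strictP R (fun _ => x0) (fun _ => b)

/-- I3: mixture independence on `X**`. -/
def AxI3 {X : Type*} (M : MixtureSpace X) (x0 : X)
    (R : (ℕ → X) → (ℕ → X) → Prop) : Prop :=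
  ∀ x y z : ℕ → X, InXSS x0 x → InXSS x0 y → InXSS x0 z →
    ∀ l ∈ Set.Ioo (0:ℝ) 1, (R x y ↔ R (mixSeq M x l z) (mixSeq M y l z))

/-- I4: mixture continuity. -/
def AxI4 {X : Type*} (M : MixtureSpace X) (x0 : X)
    (R : (ℕ → X) → (ℕ → X) → Prop) : Prop :=
  ∀ x z : ℕ → X, InXSS x0 x → InXSS x0 z → ∀ y : ℕ → X,
    IsClosed {l : ℝ | l ∈ Set.Icc (0:ℝ) 1 ∧ R (mixSeq M x l z) y} ∧
    IsClosed {l : ℝ | l ∈ Set.Icc (0:ℝ) 1 ∧ R y (mixSeq M x l z)}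

/-- I5: monotonicity. -/
def AxI5 {X : Type*} (R : (ℕ → X) → (ℕ → X) → Prop) : Prop :=
  ∀ x y : ℕ → X, (∀ t, R (fun _ => x t) (fun _ => y t)) → R x y

/-- I6: convergence. -/
def AxI6 {X : Type*} (x0 : X) (R : (ℕ → X) → (ℕ → X) → Prop) : Prop :=
  ∀ (x : ℕ → X) (a : X) (k : ℕ),
    (strictP R (bracket x0 a k) (bracket x0 (x k) k) →
      ∃ Tp, k ≤ Tp ∧ ∀ T, Tp ≤ T → R (truncMod x0 x k a T) x) ∧
    (strictP R (bracket x0 (x k) k) (bracket x0 a k) →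
      ∃ Tm, k ≤ Tm ∧ ∀ T, Tm ≤ T → R x (truncMod x0 x k a T))

/-- `(u, w)` provides an AA representation for `R` on `X^∞` (with its
discounted-utility series converging for every stream). -/
def AARepInf {X : Type*} (M : MixtureSpace X)
    (R : (ℕ → X) → (ℕ → X) → Prop) (u : X → ℝ) (w : ℕ → ℝ) : Prop :=
  M.linear u ∧ (∃ a b : X, u a ≠ u b) ∧ (∀ t, 0 ≤ w t) ∧ (∃ t, 0 < w t) ∧
  ∃ U : (ℕ → X) → ℝ,
    (∀ x : ℕ → X, Filter.Tendsto (fun N => ∑ t ∈ Finset.range N, w t * u (x t))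
      Filter.atTop (nhds (U x))) ∧
    ∀ x y : ℕ → X, (R x y ↔ U x ≥ U y)

/-! ### Exponential discounting -/

/-- F2′: essentiality of period 1. -/
def AxF2' {X : Type*} {n : ℕ} (R : (Fin n → X) → (Fin n → X) → Prop)
    (h0 : 0 < n) : Prop :=
  ∃ (a b : X) (x : Fin n → X),
    strictP R (Function.update x ⟨0, h0⟩ a) (Function.update x ⟨0, h0⟩ b)

/-- F6: impatience. -/
def AxF6 {X : Type*} {n : ℕ} (R : (Fin n → X) → (Fin n → X) → Prop)
    (h0 : 0 < n) (h1 : 1 < n) : Prop :=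
  ∀ a b : X, strictP R (fun _ => a) (fun _ => b) →
    ∀ x : Fin n → X,
      strictP R (Function.update (Function.update x ⟨0, h0⟩ a) ⟨1, h1⟩ b)
               (Function.update (Function.update x ⟨0, h0⟩ b) ⟨1, h1⟩ a)

/-- `(x₂, …, xₙ, a)`. -/
def shiftApp {X : Type*} {n : ℕ} (x : Fin n → X) (a : X) : Fin n → X :=
  fun t => if h : (t : ℕ) + 1 < n then x ⟨(t : ℕ) + 1, h⟩ else a

/-- F7: stationarity. -/
def AxF7 {X : Type*} {n : ℕ} (R : (Fin n → X) → (Fin n → X) → Prop)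
    (h0 : 0 < n) : Prop :=
  ∀ (a : X) (x y : Fin n → X),
    (R (Function.update x ⟨0, h0⟩ a) (Function.update y ⟨0, h0⟩ a) ↔
     R (shiftApp x a) (shiftApp y a))

/-- `(u, δ)` provides an exponentially discounted expected utility representation. -/
def ExpRep {X : Type*} (M : MixtureSpace X) {n : ℕ}
    (R : (Fin n → X) → (Fin n → X) → Prop) (u : X → ℝ) (δ : ℝ) : Prop :=
  M.linear u ∧ (∃ a b : X, u a ≠ u b) ∧ δ ∈ Set.Ioo (0:ℝ) 1 ∧
  ∀ x y : Fin n → X,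
    (R x y ↔ (∑ t : Fin n, δ ^ (t : ℕ) * u (x t)) ≥ ∑ t : Fin n, δ ^ (t : ℕ) * u (y t))

/-- I2′: essentiality of period 1 (infinite horizon). -/
def AxI2' {X : Type*} (x0 : X) (R : (ℕ → X) → (ℕ → X) → Prop) : Prop :=
  ∃ a b : X, strictP R (bracket x0 a 0) (fun _ => x0) ∧
    strictP R (fun _ => x0) (bracket x0 b 0)

/-- `(a, x₁, x₂, …)`. -/
def consSeq {X : Type*} (a : X) (x : ℕ → X) : ℕ → X :=
  fun t => if t = 0 then a else x (t - 1)

/-- I7: stationarity (infinite horizon). -/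
def AxI7 {X : Type*} (R : (ℕ → X) → (ℕ → X) → Prop) : Prop :=
  ∀ (a : X) (x y : ℕ → X), (R (consSeq a x) (consSeq a y) ↔ R x y)

/-- `(u, δ)` provides an exponentially discounted expected utility representation
on `X^∞`, with converging series. -/
def ExpRepInf {X : Type*} (M : MixtureSpace X)
    (R : (ℕ → X) → (ℕ → X) → Prop) (u : X → ℝ) (δ : ℝ) : Prop :=
  M.linear u ∧ (∃ a b : X, u a ≠ u b) ∧ δ ∈ Set.Ioo (0:ℝ) 1 ∧
  ∃ U : (ℕ → X) → ℝ,
    (∀ x : ℕ → X, Filter.Tendsto (fun N => ∑ t ∈ Finset.range N, δ ^ t * u (x t))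
      Filter.atTop (nhds (U x))) ∧
    ∀ x y : ℕ → X, (R x y ↔ U x ≥ U y)

/-! ### Semi-hyperbolic discounting -/

/-- The SH(T) discount function at (1-based) period `t`:
`D 1 = 1`, `D t = β₁⋯β_{t−1} δ^{t−1}` for `2 ≤ t ≤ T`,
`D t = β₁⋯β_{T−1} δ^{t−1}` for `t > T`. -/
noncomputable def SHD (T : ℕ) (β : ℕ → ℝ) (δ : ℝ) (t : ℕ) : ℝ :=
  (∏ i ∈ Finset.Icc 1 (min t T - 1), β i) * δ ^ (t - 1)

/-- Parameter restrictions: `0 < β₁ ≤ … ≤ β_{T−1} ≤ 1` and `δ ∈ (0,1)`. -/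
def SHParams (T : ℕ) (β : ℕ → ℝ) (δ : ℝ) : Prop :=
  (∀ i : ℕ, 1 ≤ i → i ≤ T - 1 → 0 < β i ∧ β i ≤ 1) ∧
  (∀ i : ℕ, 1 ≤ i → i + 1 ≤ T - 1 → β i ≤ β (i + 1)) ∧
  δ ∈ Set.Ioo (0:ℝ) 1

/-- `(u, β, δ)` provides an SH(T) discounted expected utility representation on `X^n`. -/
def SHRep {X : Type*} (M : MixtureSpace X) {n : ℕ}
    (R : (Fin n → X) → (Fin n → X) → Prop)
    (T : ℕ) (β : ℕ → ℝ) (δ : ℝ) (u : X → ℝ) : Prop :=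
  M.linear u ∧ (∃ a b : X, u a ≠ u b) ∧ SHParams T β δ ∧
  ∀ x y : Fin n → X,
    (R x y ↔ (∑ s : Fin n, SHD T β δ ((s : ℕ) + 1) * u (x s)) ≥
      ∑ s : Fin n, SHD T β δ ((s : ℕ) + 1) * u (y s))

/-- F2″: essentiality of (1-based) periods `1, …, T`. -/
def AxF2'' {X : Type*} {n : ℕ} (R : (Fin n → X) → (Fin n → X) → Prop)
    (T : ℕ) (hTn : T ≤ n) : Prop :=
  ∃ (a b : X) (x : Fin n → X), ∀ i : ℕ, ∀ hi : i < T,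
    strictP R (Function.update x ⟨i, lt_of_lt_of_le hi hTn⟩ a)
             (Function.update x ⟨i, lt_of_lt_of_le hi hTn⟩ b)

/-- F6′: impatience between (1-based) periods `T` and `T+1`. -/
def AxF6' {X : Type*} {n : ℕ} (R : (Fin n → X) → (Fin n → X) → Prop)
    (T : ℕ) (h1 : T - 1 < n) (h2 : T < n) : Prop :=
  ∀ a b : X, strictP R (fun _ => a) (fun _ => b) →
    ∀ x : Fin n → X,
      strictP R (Function.update (Function.update x ⟨T-1, h1⟩ a) ⟨T, h2⟩ b)
               (Function.update (Function.update x ⟨T-1, h1⟩ b) ⟨T, h2⟩ a)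

/-- Delete (0-based) coordinate `i`, shift the rest left, and append `a` at the end. -/
def delIns {X : Type*} {n : ℕ} (x : Fin n → X) (i : ℕ) (a : X) : Fin n → X :=
  fun s => if (s : ℕ) < i then x s
    else if h : (s : ℕ) + 1 < n then x ⟨(s : ℕ) + 1, h⟩ else a

/-- F7′: stationarity from (1-based) period `T`. -/
def AxF7' {X : Type*} {n : ℕ} (R : (Fin n → X) → (Fin n → X) → Prop)
    (T : ℕ) (h1 : T - 1 < n) : Prop :=
  ∀ (a : X) (x y : Fin n → X), (∀ s : Fin n, (s : ℕ) < T - 1 → x s = y s) →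
    (R (Function.update x ⟨T-1, h1⟩ a) (Function.update y ⟨T-1, h1⟩ a) ↔
     R (delIns x (T-1) a) (delIns y (T-1) a))

/-- `(x₁, …, x_{t−2}, a, b, x_{t+2}, …, xₙ, x_{t−1})` where `i` is the 0-based
index of period `t` (so `i = t − 1`). -/
def ebShiftFin {X : Type*} {n : ℕ} (x : Fin n → X) (i : ℕ) (hi : i - 1 < n)
    (a b : X) : Fin n → X :=
  fun s => if (s : ℕ) < i - 1 then x s
    else if (s : ℕ) = i - 1 then a
    else if (s : ℕ) = i then b
    else if h : (s : ℕ) + 1 < n then x ⟨(s : ℕ) + 1, h⟩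
    else x ⟨i - 1, hi⟩

/-- F8: early bias. -/
def AxF8 {X : Type*} {n : ℕ} (R : (Fin n → X) → (Fin n → X) → Prop)
    (T : ℕ) (hTn : T < n) : Prop :=
  ∀ a b c d : X,
    strictP R (fun _ => a) (fun _ => c) → strictP R (fun _ => d) (fun _ => b) →
    ∀ x : Fin n → X, ∀ i : ℕ, ∀ hi1 : 1 ≤ i, ∀ hi2 : i ≤ T - 1,
      (R (Function.update (Function.update x ⟨i, by omega⟩ a) ⟨i+1, by omega⟩ b)
         (Function.update (Function.update x ⟨i, by omega⟩ c) ⟨i+1, by omega⟩ d) ∧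
       R (Function.update (Function.update x ⟨i, by omega⟩ c) ⟨i+1, by omega⟩ d)
         (Function.update (Function.update x ⟨i, by omega⟩ a) ⟨i+1, by omega⟩ b)) →
      R (ebShiftFin x i (by omega) a b) (ebShiftFin x i (by omega) c d)

/-- `(u, β, δ)` provides an SH(T) discounted expected utility representation on `X^∞`. -/
def SHRepInf {X : Type*} (M : MixtureSpace X)
    (R : (ℕ → X) → (ℕ → X) → Prop)
    (T : ℕ) (β : ℕ → ℝ) (δ : ℝ) (u : X → ℝ) : Prop :=
  M.linear u ∧ (∃ a b : X, u a ≠ u b) ∧ SHParams T β δ ∧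
  ∃ U : (ℕ → X) → ℝ,
    (∀ x : ℕ → X, Filter.Tendsto
      (fun N => ∑ t ∈ Finset.range N, SHD T β δ (t + 1) * u (x t))
      Filter.atTop (nhds (U x))) ∧
    ∀ x y : ℕ → X, (R x y ↔ U x ≥ U y)

/-- I2″: essentiality of (1-based) periods `1, …, T`. -/
def AxI2'' {X : Type*} (x0 : X) (R : (ℕ → X) → (ℕ → X) → Prop) (T : ℕ) : Prop :=
  ∃ a b : X, ∀ t : ℕ, t < T →
    strictP R (bracket x0 a t) (fun _ => x0) ∧ strictP R (fun _ => x0) (bracket x0 b t)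

/-- Delete (0-based) coordinate `i` of an infinite stream. -/
def delSeq {X : Type*} (x : ℕ → X) (i : ℕ) : ℕ → X :=
  fun t => if t < i then x t else x (t + 1)

/-- I7′: stationarity from (1-based) period `T`. -/
def AxI7' {X : Type*} (R : (ℕ → X) → (ℕ → X) → Prop) (T : ℕ) : Prop :=
  ∀ (a : X) (x y : ℕ → X), (∀ t, t < T - 1 → x t = y t) →
    (R (Function.update x (T-1) a) (Function.update y (T-1) a) ↔
     R (delSeq x (T-1)) (delSeq y (T-1)))

/-- `(x₁, …, x_{t−2}, a, b, x_{t+2}, …)` where `i = t − 1` (0-based index of period `t`). -/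
def ebShiftSeq {X : Type*} (x : ℕ → X) (i : ℕ) (a b : X) : ℕ → X :=
  fun s => if s < i - 1 then x s
    else if s = i - 1 then a
    else if s = i then b
    else x (s + 1)

/-- I8: early bias (infinite horizon). -/
def AxI8 {X : Type*} (R : (ℕ → X) → (ℕ → X) → Prop) (T : ℕ) : Prop :=
  ∀ a b c d : X,
    strictP R (fun _ => a) (fun _ => c) → strictP R (fun _ => d) (fun _ => b) →
    ∀ x : ℕ → X, ∀ i : ℕ, 1 ≤ i → i ≤ T - 1 →
      (R (Function.update (Function.update x i a) (i+1) b)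
         (Function.update (Function.update x i c) (i+1) d) ∧
       R (Function.update (Function.update x i c) (i+1) d)
         (Function.update (Function.update x i a) (i+1) b)) →
      R (ebShiftSeq x i a b) (ebShiftSeq x i c d)

/-- Under F1, F2′, F3, F4, F5 and F7 (stationarity), every
period is essential. -/
theorem every_period_essential {X : Type*} (M : MixtureSpace X)
    (n : ℕ) (hn : 2 ≤ n) (R : (Fin n → X) → (Fin n → X) → Prop)
    (h1 : AxF1 R) (h2 : AxF2' R (by omega)) (h3 : AxF3 M R) (h4 : AxF4 M R)
    (h5 : AxF5 R) (h7 : AxF7 R (by omega)) :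
    ∀ t : Fin n, ∃ (a b : X) (x : Fin n → X),
      strictP R (Function.update x t a) (Function.update x t b) := by
  obtain ⟨a0, b0, z0, hz0⟩ := h2
  have key : ∀ i : ℕ, ∀ hi : i < n, ∃ (a b : X) (z : Fin n → X),
      strictP R (Function.update z ⟨i, hi⟩ a) (Function.update z ⟨i, hi⟩ b) := by
    intro i
    induction i with
    | zero => intro hi; exact ⟨a0, b0, z0, hz0⟩
    | succ i ih =>
      intro hi
      obtain ⟨a, b, z, hab⟩ := ih (by omega)
      have hi' : i < n := by omega
      set c := z ⟨n - 1, by omega⟩ with hc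
      set w : Fin n → X := fun s =>
        if h : (s : ℕ) = 0 then c else z ⟨(s : ℕ) - 1, by omega⟩ with hw
      refine ⟨a, b, w, ?_⟩
      have key1 : ∀ e : X, shiftApp (Function.update w ⟨i + 1, hi⟩ e) c
          = Function.update z ⟨i, hi'⟩ e := by
        intro e
        funext s
        simp only [shiftApp, Function.update_apply, hw, Fin.ext_iff]
        by_cases h : (s : ℕ) + 1 < n
        · rw [dif_pos h]
          by_cases hsi : (s : ℕ) = i
          · simp [hsi]
          · rw [if_neg (by simpa using (by omega : ¬ ((s:ℕ) + 1 = i + 1))),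
              if_neg hsi, dif_neg (by omega : ¬ ((s:ℕ) + 1 = 0))]
            congr 1
        · rw [dif_neg h]
          rw [if_neg (by omega : ¬ ((s:ℕ) = i))]
          have : (s : ℕ) = n - 1 := by have := s.isLt; omega
          rw [hc]
          congr 1
          ext
          simp [this]
      have key0 : ∀ e : X,
          Function.update (Function.update w ⟨i + 1, hi⟩ e) ⟨0, by omega⟩ c
          = Function.update w ⟨i + 1, hi⟩ e := by
        intro e
        have h0 : (Function.update w ⟨i + 1, hi⟩ e) ⟨0, by omega⟩ = c := by
          rw [Function.update_apply, if_neg (by simp [Fin.ext_iff])]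
          simp [hw]
        conv_lhs => rw [← h0]
        exact Function.update_eq_self _ _
      have hiff := h7 c (Function.update w ⟨i + 1, hi⟩ a)
        (Function.update w ⟨i + 1, hi⟩ b)
      have hiff' := h7 c (Function.update w ⟨i + 1, hi⟩ b)
        (Function.update w ⟨i + 1, hi⟩ a)
      rw [key0 a, key0 b, key1 a, key1 b] at hiff hiff'
      exact ⟨hiff.mpr hab.1, fun h => hab.2 (hiff'.mp h)⟩
  intro t
  obtain ⟨a, b, z, h⟩ := key (t : ℕ) t.isLt
  exact ⟨a, b, z, by simpa using h⟩
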